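/- arXiv:hep-th/9812234 — 2 statements merged into one kernel-verified Lean document; each statement's English description precedes it below -/
import Mathlib

section
/- For n a positive integer, a < x real, and f continuous on [a,x], the n-fold iterated integral of f from a to x equals (1/Γ(n)) ∫_a^x f(t)(x-t)^{n-1} dt (Cauchy formula for repeated integration). -/
open intervalIntegral

/-- `iterInt a f n` is the (n+1)-fold iterated integral of `f` with base point `a`:
`iterInt a f 0 x = ∫ t in a..x, f t` and
`iterInt a f (n+1) x = ∫ t in a..x, iterInt a f n t`. -/
noncomputable def iterInt (a : ℝ) (f : ℝ → ℝ) : ℕ → ℝ → ℝ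
  | 0, x => ∫ t in a..x, f t
  | (n+1), x => ∫ t in a..x, iterInt a f n t

lemma iterInt_shift (a : ℝ) (f : ℝ → ℝ) :
    ∀ (m : ℕ) (y : ℝ), iterInt a f (m + 1) y = iterInt a (fun s => ∫ t in a..s, f t) m y := by
  intro m
  induction m with
  | zero => intro y; simp [iterInt]
  | succ m ihm =>
    intro y
    show (∫ t in a..y, iterInt a f (m + 1) t) = _
    simp only [ihm]
    rfl

lemma key (a : ℝ) :
    ∀ (n : ℕ) (f : ℝ → ℝ), Continuous f → ∀ y : ℝ,
      iterInt a f n y = (1 / (n.factorial : ℝ)) * ∫ t in a..y, f t * (y - t) ^ n := by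
  intro n
  induction n with
  | zero => intro f hf y; simp [iterInt]
  | succ n ih =>
    intro f hf y
    set F : ℝ → ℝ := fun s => ∫ t in a..s, f t with hFdef
    have hF : Continuous F :=
      intervalIntegral.continuous_primitive (fun _ _ => hf.intervalIntegrable _ _) a
    have hder : ∀ t ∈ Set.uIcc a y, HasDerivAt F (f t) t := fun t _ =>
      intervalIntegral.integral_hasDerivAt_right (hf.intervalIntegrable a t)
        (hf.stronglyMeasurable.stronglyMeasurableAtFilter) hf.continuousAt
    have hv : ∀ t ∈ Set.uIcc a y,
        HasDerivAt (fun t => -((y - t) ^ (n + 1)) / (n + 1 : ℝ)) ((y - t) ^ n) t := by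
      intro t _
      have h1 : HasDerivAt (fun t : ℝ => y - t) (-1) t := (hasDerivAt_id t).const_sub y
      have h2 := (h1.pow (n + 1)).neg.div_const ((n : ℝ) + 1)
      convert h2 using 1
      have hne : (1:ℝ) + n ≠ 0 := by positivity
      push_cast
      · rfl
      · rfl
      · rfl
      rw [Nat.add_sub_cancel, eq_div_iff (by positivity)]
      push_cast
      ring
    have ibp := intervalIntegral.integral_mul_deriv_eq_deriv_mul hder hv
      (hf.intervalIntegrable a y)
      (Continuous.intervalIntegrable (by continuity) a y)
    rw [iterInt_shift, ih F hF y, ibp]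
    have hFa : F a = 0 := intervalIntegral.integral_same
    have hvy : -((y - y) ^ (n + 1)) / ((n : ℝ) + 1) = 0 := by simp
    have hI : ∫ t in a..y, f t * (-((y - t) ^ (n + 1)) / ((n : ℝ) + 1))
        = (-(1 / ((n : ℝ) + 1))) * ∫ t in a..y, f t * (y - t) ^ (n + 1) := by
      rw [← intervalIntegral.integral_const_mul]
      congr 1; ext t; ring
    rw [hFa, hvy, hI, mul_zero, zero_mul, sub_zero, zero_sub, neg_mul, neg_neg]
    have hfac : (1:ℝ) / ↑n.factorial * (1 / ((n : ℝ) + 1)) = 1 / ↑(n + 1).factorial := by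
      rw [Nat.factorial_succ, div_mul_div_comm, one_mul]
      push_cast
      ring_nf
    rw [← mul_assoc, hfac]

theorem cauchy_repeated_integration (a x : ℝ) (f : ℝ → ℝ) (n : ℕ)
    (hn : 0 < n) (hax : a < x) (hf : ContinuousOn f (Set.Icc a x)) :
    iterInt a f (n - 1) x
      = (1 / Real.Gamma n) * ∫ t in a..x, f t * (x - t) ^ (n - 1) := by
  obtain ⟨m, rfl⟩ := Nat.exists_eq_succ_of_ne_zero hn.ne'
  simp only [Nat.succ_sub_one]
  set g : ℝ → ℝ := Set.IccExtend hax.le ((Set.Icc a x).restrict f) with hg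
  have hgc : Continuous g := (ContinuousOn.restrict hf).Icc_extend'
  have hEq : ∀ t ∈ Set.Icc a x, g t = f t := fun t ht => by
    rw [hg, Set.IccExtend_of_mem hax.le _ ht]; rfl
  have hiter : ∀ (k : ℕ) (y : ℝ), y ∈ Set.Icc a x → iterInt a f k y = iterInt a g k y := by
    intro k
    induction k with
    | zero =>
      intro y hy
      show (∫ t in a..y, f t) = ∫ t in a..y, g t
      refine intervalIntegral.integral_congr fun t ht => ?_
      rw [Set.uIcc_of_le hy.1] at ht
      exact (hEq t ⟨ht.1, ht.2.trans hy.2⟩).symm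
    | succ k ihk =>
      intro y hy
      show (∫ t in a..y, iterInt a f k t) = ∫ t in a..y, iterInt a g k t
      refine intervalIntegral.integral_congr fun t ht => ?_
      rw [Set.uIcc_of_le hy.1] at ht
      exact ihk t ⟨ht.1, ht.2.trans hy.2⟩
  have hInt : ∫ t in a..x, f t * (x - t) ^ m = ∫ t in a..x, g t * (x - t) ^ m := by
    refine intervalIntegral.integral_congr fun t ht => ?_
    rw [Set.uIcc_of_le hax.le] at ht
    rw [hEq t ht]
  rw [hiter m x ⟨hax.le, le_refl x⟩, hInt, key a m g hgc x]
  congr 1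
  rw [show ((m + 1 : ℕ) : ℝ) = (m : ℝ) + 1 by push_cast; ring, Real.Gamma_nat_eq_factorial]
end

section
/- Define exp(σ,x) = ∑_{k=⌈σ⌉}^∞ x^{k-σ}/Γ(1+k-σ) for σ > 0 and x > 0. Then exp(σ,x) - exp(x) → 0 as x → ∞, for every fixed σ > 0. -/
open Filter

/-- The Type II fractional derivative of order `σ` of `exp`:
`exp(σ,x) = ∑_{k=⌈σ⌉}^∞ x^{k-σ}/Γ(1+k-σ)`. -/
noncomputable def fracExp (σ x : ℝ) : ℝ :=
  ∑' k : ℕ, x ^ (((k : ℝ) + (⌈σ⌉ : ℝ)) - σ) / Real.Gamma (1 + ((k : ℝ) + (⌈σ⌉ : ℝ)) - σ)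

open MeasureTheory intervalIntegral Set

/-- Real partial Gamma function. -/
noncomputable def pG (s x : ℝ) : ℝ := ∫ t in (0)..x, Real.exp (-t) * t ^ (s - 1)

lemma pG_eq_cplx {s : ℝ} (x : ℝ) (hx : 0 ≤ x) :
    (pG s x : ℂ) = Complex.partialGamma s x := by
  rw [pG, Complex.partialGamma, ← intervalIntegral.integral_ofReal]
  apply intervalIntegral.integral_congr
  intro t ht
  rw [Set.uIcc_of_le hx] at ht
  push_cast
  rw [Complex.ofReal_cpow ht.1]
  push_cast
  ring

lemma pG_succ {s : ℝ} (hs : 0 < s) {x : ℝ} (hx : 0 ≤ x) :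
    pG (s + 1) x = s * pG s x - Real.exp (-x) * x ^ s := by
  have key := Complex.partialGamma_add_one (s := (s : ℂ)) (by simpa using hs) hx
  apply Complex.ofReal_injective
  calc ((pG (s + 1) x : ℝ) : ℂ) = Complex.partialGamma (↑(s + 1)) x := pG_eq_cplx x hx
    _ = Complex.partialGamma ((s : ℂ) + 1) x := by norm_cast
    _ = ↑s * Complex.partialGamma (s : ℂ) x - ((Real.exp (-x) : ℝ) : ℂ) * (x : ℂ) ^ (s : ℂ) := key
    _ = ((s * pG s x - Real.exp (-x) * x ^ s : ℝ) : ℂ) := by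
        rw [← pG_eq_cplx x hx, ← Complex.ofReal_cpow hx]
        push_cast
        ring

lemma pG_nonneg {s x : ℝ} (hx : 0 ≤ x) : 0 ≤ pG s x := by
  apply intervalIntegral.integral_nonneg hx
  intro t ht
  exact mul_nonneg (Real.exp_pos _).le (Real.rpow_nonneg ht.1 _)

lemma pG_le {s : ℝ} (hs : 1 ≤ s) {x : ℝ} (hx : 0 < x) : pG s x ≤ x ^ s := by
  have h1 : pG s x ≤ ∫ _ in (0)..x, x ^ (s - 1) := by
    apply intervalIntegral.integral_mono_on hx.le
    · rw [intervalIntegrable_iff_integrableOn_Ioc_of_le hx.le]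
      exact (Real.GammaIntegral_convergent (by linarith)).mono_set Ioc_subset_Ioi_self
    · exact intervalIntegrable_const
    · intro t ht
      have ht0 : 0 ≤ t := ht.1
      calc Real.exp (-t) * t ^ (s - 1) ≤ 1 * x ^ (s - 1) := by
            apply mul_le_mul _ (Real.rpow_le_rpow ht0 ht.2 (by linarith))
              (Real.rpow_nonneg ht0 _) zero_le_one
            exact Real.exp_le_one_iff.mpr (by linarith)
        _ = x ^ (s - 1) := one_mul _
  rw [intervalIntegral.integral_const, smul_eq_mul, sub_zero] at h1
  calc pG s x ≤ x * x ^ (s - 1) := h1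
    _ = x ^ (1 : ℝ) * x ^ (s - 1) := by rw [Real.rpow_one]
    _ = x ^ s := by rw [← Real.rpow_add hx]; norm_num

lemma Gamma_fact_le {s : ℝ} (hs : 0 < s) (n : ℕ) :
    Real.Gamma (s + 1) * n.factorial ≤ Real.Gamma (s + n + 1) := by
  induction n with
  | zero => simp
  | succ n ih =>
      have hn0 : (0 : ℝ) ≤ n := Nat.cast_nonneg n
      have hfac : (((n + 1).factorial : ℕ) : ℝ) = (n + 1) * n.factorial := by
        rw [Nat.factorial_succ]; push_cast; ring
      have h1 : Real.Gamma (s + ((n : ℕ) + 1 : ℕ) + 1) = (s + n + 1) * Real.Gamma (s + n + 1) := by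
        have he : s + (((n : ℕ) + 1 : ℕ) : ℝ) + 1 = (s + n + 1) + 1 := by push_cast; ring
        rw [he, Real.Gamma_add_one (by linarith)]
      rw [h1, hfac]
      have hΓ : 0 < Real.Gamma (s + n + 1) := Real.Gamma_pos_of_pos (by linarith)
      calc Real.Gamma (s + 1) * ((n + 1 : ℝ) * n.factorial)
          = (n + 1 : ℝ) * (Real.Gamma (s + 1) * n.factorial) := by ring
        _ ≤ (s + n + 1) * Real.Gamma (s + n + 1) := by
            apply mul_le_mul (by linarith) ih _ (by linarith)
            have : (0:ℝ) < Real.Gamma (s+1) := Real.Gamma_pos_of_pos (by linarith)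
            have hf : (0:ℝ) < n.factorial := by exact_mod_cast n.factorial_pos
            positivity

lemma summable_aux {s : ℝ} (hs : 0 < s) {x : ℝ} (hx : 0 < x) :
    Summable (fun k : ℕ => x ^ (s + k) / Real.Gamma (s + k + 1)) := by
  have hg : Summable (fun k : ℕ => x ^ s / Real.Gamma (s + 1) * (x ^ k / k.factorial)) :=
    (Real.summable_pow_div_factorial x).mul_left _
  refine Summable.of_nonneg_of_le (fun k => ?_) (fun k => ?_) hg
  · have hk : (0 : ℝ) ≤ k := Nat.cast_nonneg k
    exact div_nonneg (Real.rpow_nonneg hx.le _)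
      (Real.Gamma_pos_of_pos (by linarith)).le
  · have hk : (0 : ℝ) ≤ k := Nat.cast_nonneg k
    have hΓ1 : 0 < Real.Gamma (s + 1) := Real.Gamma_pos_of_pos (by linarith)
    have hf : (0 : ℝ) < k.factorial := by exact_mod_cast k.factorial_pos
    have hxx : x ^ (s + (k : ℝ)) = x ^ s * x ^ k := by
      rw [Real.rpow_add hx, Real.rpow_natCast]
    rw [hxx, div_mul_div_comm]
    exact div_le_div_of_nonneg_left
      (mul_nonneg (Real.rpow_nonneg hx.le _) (pow_nonneg hx.le _))
      (mul_pos hΓ1 hf) (Gamma_fact_le hs k)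

lemma pG_identity {s : ℝ} (hs : 0 < s) {x : ℝ} (hx : 0 < x) (n : ℕ) :
    pG s x / Real.Gamma s = Real.exp (-x) *
      (∑ k ∈ Finset.range n, x ^ (s + k) / Real.Gamma (s + k + 1)) +
      pG (s + n) x / Real.Gamma (s + n) := by
  induction n with
  | zero => simp
  | succ n ih =>
      have hn0 : (0 : ℝ) ≤ n := Nat.cast_nonneg n
      have hsn : (0 : ℝ) < s + n := by linarith
      rw [Finset.sum_range_succ, ih]
      have he : (((n : ℕ) + 1 : ℕ) : ℝ) = (n : ℝ) + 1 := by push_cast; ring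
      rw [he, show s + ((n : ℝ) + 1) = (s + n) + 1 from by ring]
      rw [pG_succ hsn hx.le, Real.Gamma_add_one hsn.ne']
      have hGn : (0:ℝ) < Real.Gamma (s + n) := Real.Gamma_pos_of_pos hsn
      field_simp
      ring

lemma remainder_tendsto {s : ℝ} (hs : 0 < s) {x : ℝ} (hx : 0 < x) :
    Tendsto (fun n : ℕ => pG (s + n) x / Real.Gamma (s + n)) atTop (nhds 0) := by
  have hb : Tendsto (fun n : ℕ => x ^ (s + (n : ℝ)) / Real.Gamma (s + n)) atTop (nhds 0) := by
    rw [← Filter.tendsto_add_atTop_iff_nat 1]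
    have hbound : ∀ n : ℕ, x ^ (s + ((n + 1 : ℕ) : ℝ)) / Real.Gamma (s + ((n + 1 : ℕ) : ℝ))
        ≤ x ^ (s + 1) / Real.Gamma (s + 1) * (x ^ n / n.factorial) := by
      intro n
      have hn0 : (0 : ℝ) ≤ n := Nat.cast_nonneg n
      have h1 : Real.Gamma (s + ((n + 1 : ℕ) : ℝ)) = Real.Gamma (s + n + 1) := by
        congr 1; push_cast; ring
      have h2 : Real.Gamma (s + 1) * n.factorial ≤ Real.Gamma (s + n + 1) :=
        Gamma_fact_le hs n
      have hΓ1 : 0 < Real.Gamma (s + 1) := Real.Gamma_pos_of_pos (by linarith)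
      have hf : (0 : ℝ) < n.factorial := by exact_mod_cast n.factorial_pos
      have hx1 : x ^ (s + ((n + 1 : ℕ) : ℝ)) = x ^ (s + 1) * x ^ n := by
        rw [← Real.rpow_natCast x n, ← Real.rpow_add hx]
        congr 1; push_cast; ring
      rw [h1, hx1, div_mul_div_comm]
      exact div_le_div_of_nonneg_left
        (mul_nonneg (Real.rpow_nonneg hx.le _) (pow_nonneg hx.le _))
        (mul_pos hΓ1 hf) h2
    have hnn : ∀ n : ℕ, 0 ≤ x ^ (s + ((n + 1 : ℕ) : ℝ)) / Real.Gamma (s + ((n + 1 : ℕ) : ℝ)) := by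
      intro n
      have hn0 : (0 : ℝ) ≤ n := Nat.cast_nonneg n
      exact div_nonneg (Real.rpow_nonneg hx.le _)
        (Real.Gamma_pos_of_pos (by push_cast; linarith)).le
    apply squeeze_zero hnn hbound
    have := (Real.summable_pow_div_factorial x).tendsto_atTop_zero
    simpa using this.const_mul (x ^ (s + 1) / Real.Gamma (s + 1))
  apply squeeze_zero' _ _ hb
  · filter_upwards with n
    have hn0 : (0 : ℝ) ≤ n := Nat.cast_nonneg n
    exact div_nonneg (pG_nonneg hx.le) (Real.Gamma_pos_of_pos (by linarith)).le
  · filter_upwards [eventually_ge_atTop 1] with n hn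
    have h1n : (1 : ℝ) ≤ s + n := by
      have : (1 : ℝ) ≤ (n : ℝ) := by exact_mod_cast hn
      linarith
    have hΓ : 0 < Real.Gamma (s + n) := Real.Gamma_pos_of_pos (by linarith)
    exact div_le_div_of_nonneg_right (pG_le h1n hx) hΓ.le

lemma fracExp_eq_tsum (σ x : ℝ) :
    fracExp σ x = ∑' k : ℕ, x ^ ((⌈σ⌉ : ℝ) - σ + k) / Real.Gamma ((⌈σ⌉ : ℝ) - σ + k + 1) := by
  apply tsum_congr
  intro k
  congr 1
  · congr 1; ring
  · congr 1; ring

lemma fracExp_eq_pG {σ : ℝ} (hσ : 0 < σ) (hδ : 0 < (⌈σ⌉ : ℝ) - σ) {x : ℝ} (hx : 0 < x) :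
    fracExp σ x = Real.exp x * pG ((⌈σ⌉ : ℝ) - σ) x / Real.Gamma ((⌈σ⌉ : ℝ) - σ) := by
  set δ : ℝ := (⌈σ⌉ : ℝ) - σ with hδdef
  have hsum := summable_aux hδ hx
  have h1 : Tendsto (fun n : ℕ => Real.exp (-x) *
      ∑ k ∈ Finset.range n, x ^ (δ + k) / Real.Gamma (δ + k + 1)) atTop
      (nhds (Real.exp (-x) * ∑' k : ℕ, x ^ (δ + k) / Real.Gamma (δ + k + 1))) :=
    (hsum.hasSum.tendsto_sum_nat).const_mul _
  have h2 : Tendsto (fun n : ℕ => Real.exp (-x) *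
      ∑ k ∈ Finset.range n, x ^ (δ + k) / Real.Gamma (δ + k + 1)) atTop
      (nhds (pG δ x / Real.Gamma δ)) := by
    have h3 : (fun n : ℕ => Real.exp (-x) *
        ∑ k ∈ Finset.range n, x ^ (δ + k) / Real.Gamma (δ + k + 1)) =
        fun n : ℕ => pG δ x / Real.Gamma δ - pG (δ + n) x / Real.Gamma (δ + n) := by
      funext n
      rw [pG_identity hδ hx n]
      ring
    rw [h3]
    simpa using (tendsto_const_nhds (x := pG δ x / Real.Gamma δ)).sub
      (remainder_tendsto hδ hx)
  have key := tendsto_nhds_unique h1 h2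
  rw [fracExp_eq_tsum, ← hδdef, mul_div_assoc, ← key, ← mul_assoc, ← Real.exp_add]
  simp

theorem fracExp_asymptotic (σ : ℝ) (hσ : 0 < σ) :
    Tendsto (fun x : ℝ => fracExp σ x - Real.exp x) atTop (nhds 0) := by
  have hδ0 : 0 ≤ (⌈σ⌉ : ℝ) - σ := by
    have := Int.le_ceil σ
    linarith
  rcases eq_or_lt_of_le hδ0 with hδ | hδ
  · -- δ = 0 : fracExp σ x = exp x for all x
    have hσeq : (⌈σ⌉ : ℝ) = σ := by linarith
    have heq : ∀ x : ℝ, fracExp σ x = Real.exp x := by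
      intro x
      rw [fracExp_eq_tsum, Real.exp_eq_exp_ℝ, NormedSpace.exp_eq_tsum_div]
      apply tsum_congr
      intro k
      rw [hσeq, sub_self, zero_add, Real.rpow_natCast, Real.Gamma_nat_eq_factorial]
    have : (fun x : ℝ => fracExp σ x - Real.exp x) = fun _ => (0 : ℝ) := by
      funext x; rw [heq]; ring
    rw [this]
    exact tendsto_const_nhds
  · -- 0 < δ < 1
    set δ : ℝ := (⌈σ⌉ : ℝ) - σ with hδdef
    have hδ1 : δ < 1 := by
      have := Int.ceil_lt_add_one σ
      rw [hδdef]; push_cast at this ⊢; linarith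
    have hΓpos : 0 < Real.Gamma δ := Real.Gamma_pos_of_pos hδ
    have key : ∀ x : ℝ, 1 ≤ x →
        |fracExp σ x - Real.exp x| ≤ x ^ (δ - 1) / Real.Gamma δ := by
      intro x hx1
      have hx : (0 : ℝ) < x := lt_of_lt_of_le one_pos hx1
      have hint : IntegrableOn (fun t : ℝ => Real.exp (-t) * t ^ (δ - 1)) (Ioi 0) :=
        Real.GammaIntegral_convergent hδ
      have hint1 : IntegrableOn (fun t : ℝ => Real.exp (-t) * t ^ (δ - 1)) (Ioc 0 x) :=
        hint.mono_set Ioc_subset_Ioi_self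
      have hint2 : IntegrableOn (fun t : ℝ => Real.exp (-t) * t ^ (δ - 1)) (Ioi x) :=
        hint.mono_set (Ioi_subset_Ioi hx.le)
      have hsplit : Real.Gamma δ = pG δ x +
          ∫ t in Ioi x, Real.exp (-t) * t ^ (δ - 1) := by
        rw [Real.Gamma_eq_integral hδ, pG, intervalIntegral.integral_of_le hx.le]
        rw [← Ioc_union_Ioi_eq_Ioi hx.le,
          setIntegral_union (Ioc_disjoint_Ioi le_rfl) measurableSet_Ioi hint1 hint2]
      have htail_nonneg : 0 ≤ ∫ t in Ioi x, Real.exp (-t) * t ^ (δ - 1) :=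
        setIntegral_nonneg measurableSet_Ioi fun t ht =>
          mul_nonneg (Real.exp_pos _).le (Real.rpow_nonneg (hx.trans ht).le _)
      have htail_le : (∫ t in Ioi x, Real.exp (-t) * t ^ (δ - 1))
          ≤ x ^ (δ - 1) * Real.exp (-x) := by
        have hintc : IntegrableOn (fun t : ℝ => Real.exp (-t) * x ^ (δ - 1)) (Ioi x) := by
          apply Integrable.mul_const
          have := exp_neg_integrableOn_Ioi x (b := 1) one_pos
          exact (by simpa using this : IntegrableOn (fun t : ℝ => Real.exp (-t)) (Ioi x))
        calc (∫ t in Ioi x, Real.exp (-t) * t ^ (δ - 1))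
            ≤ ∫ t in Ioi x, Real.exp (-t) * x ^ (δ - 1) := by
              apply setIntegral_mono_on hint2 hintc measurableSet_Ioi
              intro t ht
              apply mul_le_mul_of_nonneg_left _ (Real.exp_pos _).le
              exact Real.rpow_le_rpow_of_nonpos hx (le_of_lt ht) (by linarith)
          _ = x ^ (δ - 1) * Real.exp (-x) := by
              rw [MeasureTheory.integral_mul_const, integral_exp_neg_Ioi, mul_comm]
      rw [fracExp_eq_pG hσ hδ hx, ← hδdef]
      have habs : Real.exp x * pG δ x / Real.Gamma δ - Real.exp x =
          -(Real.exp x * (∫ t in Ioi x, Real.exp (-t) * t ^ (δ - 1)) / Real.Gamma δ) := by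
        field_simp
        rw [hsplit]
        ring
      rw [habs, abs_neg, abs_of_nonneg (by positivity)]
      calc Real.exp x * (∫ t in Ioi x, Real.exp (-t) * t ^ (δ - 1)) / Real.Gamma δ
          ≤ Real.exp x * (x ^ (δ - 1) * Real.exp (-x)) / Real.Gamma δ := by
            apply div_le_div_of_nonneg_right _ hΓpos.le
            exact mul_le_mul_of_nonneg_left htail_le (Real.exp_pos _).le
        _ = x ^ (δ - 1) / Real.Gamma δ := by
            rw [← mul_assoc, mul_comm (Real.exp x), mul_assoc, ← Real.exp_add]
            simp
    have hg : Tendsto (fun x : ℝ => x ^ (δ - 1) / Real.Gamma δ) atTop (nhds 0) := by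
      have h := (tendsto_rpow_neg_atTop (by linarith : (0:ℝ) < 1 - δ)).div_const
        (Real.Gamma δ)
      simp only [zero_div] at h
      apply h.congr
      intro x
      congr 1
      · congr 1; ring
    apply squeeze_zero_norm' _ hg
    filter_upwards [eventually_ge_atTop 1] with x hx
    exact key x hx
end
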